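/- (Measurability of approximate Taylor polynomials.) Let D ⊆ ℝ^n be measurable, k a positive integer, and f : D → ℝ a measurable function which has an approximate (k−1)-Taylor polynomial at almost every point of D. Then there exist measurable functions a_J : D → ℝ, one for each multi-index J with |J| ≤ k−1, such that for almost every x₀ ∈ D, f has an approximate (k−1)-Taylor polynomial at x₀ with polynomial x ↦ Σ_{|J| ≤ k−1} a_J(x₀) (x − x₀)^J. (This is the paper's Corollary 4.4 specialized to the abelian Carnot group ℝ^n.) -/

import Mathlib

open MeasureTheory Metric Filter

noncomputable section

/-- `ℝ^n` with the Euclidean norm. -/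
abbrev Euc (n : ℕ) := EuclideanSpace ℝ (Fin n)

/-- A set `S ⊆ ℝ^n` has density one at `x` if
`vol(S ∩ B(x,r))/vol(B(x,r)) → 1` as `r → 0⁺`. -/
def DensityOneAt {n : ℕ} (S : Set (Euc n)) (x : Euc n) : Prop :=
  Tendsto (fun r : ℝ => volume (S ∩ ball x r) / volume (ball x r))
    (nhdsWithin 0 (Set.Ioi 0)) (nhds 1)

/-- A set has density zero at `x` if its complement has density one at `x`. -/
def DensityZeroAt {n : ℕ} (S : Set (Euc n)) (x : Euc n) : Prop :=
  DensityOneAt Sᶜ x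

/-- Degree `|J|` of a multi-index. -/
def mdeg {n : ℕ} (J : Fin n → ℕ) : ℕ := ∑ i, J i

/-- Monomial `x^J = x₁^{j₁} ⋯ xₙ^{jₙ}`. -/
def mpow {n : ℕ} (x : Euc n) (J : Fin n → ℕ) : ℝ := ∏ i, (x i) ^ (J i)

/-- `J! = j₁! ⋯ jₙ!`. -/
def Jfact {n : ℕ} (J : Fin n → ℕ) : ℕ := ∏ i, Nat.factorial (J i)

/-- `p : ℝ^n → ℝ` is a polynomial function of (total) degree at most `k`. -/
def IsPolyFun (n k : ℕ) (p : Euc n → ℝ) : Prop :=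
  ∃ P : MvPolynomial (Fin n) ℝ, P.totalDegree ≤ k ∧
    ∀ x : Euc n, p x = MvPolynomial.eval (fun i => x i) P

/-- `f : D → ℝ` is approximately differentiable of order `k` at `x₀` (a density point
of `D`) with polynomial `p`: `p` has degree at most `k` and for every `ε > 0` the set
`{x ∈ D : |f x − p x| > ε ‖x − x₀‖^k}` has density zero at `x₀`. -/
def ApproxDiffAt {n : ℕ} (k : ℕ) (D : Set (Euc n)) (f : Euc n → ℝ)
    (x₀ : Euc n) (p : Euc n → ℝ) : Prop :=
  DensityOneAt D x₀ ∧ IsPolyFun n k p ∧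
    ∀ ε : ℝ, 0 < ε →
      DensityZeroAt {x | x ∈ D ∧ ε * ‖x - x₀‖ ^ k < |f x - p x|} x₀

/-- `f : D → ℝ` has an approximate `(k−1)`-Taylor polynomial at `x₀` (a density point
of `D`) with polynomial `p`: `p` has degree at most `k−1` and there is `M > 0` such that
`{x ∈ D : |f x − p x| > M ‖x − x₀‖^k}` has density zero at `x₀`. -/
def HasApproxTaylorAt {n : ℕ} (k : ℕ) (D : Set (Euc n)) (f : Euc n → ℝ)
    (x₀ : Euc n) (p : Euc n → ℝ) : Prop :=
  DensityOneAt D x₀ ∧ IsPolyFun n (k - 1) p ∧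
    ∃ M : ℝ, 0 < M ∧
      DensityZeroAt {x | x ∈ D ∧ M * ‖x - x₀‖ ^ k < |f x - p x|} x₀

/-- The finset of multi-indices `J` with `|J| ≤ k`. -/
def multiIdxLe (n k : ℕ) : Finset (Fin n → ℕ) :=
  (Fintype.piFinset fun _ : Fin n => Finset.range (k+1)).filter fun J => mdeg J ≤ k

/-- The finset of multi-indices `J` with `|J| < k` (i.e. `|J| ≤ k−1`). -/
def multiIdxLt (n k : ℕ) : Finset (Fin n → ℕ) :=
  (Fintype.piFinset fun _ : Fin n => Finset.range (k+1)).filter fun J => mdeg J < k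

/-- Partial derivative `∂g/∂xᵢ` (as a line derivative in the direction `eᵢ`). -/
def pd {n : ℕ} (i : Fin n) (g : Euc n → ℝ) : Euc n → ℝ :=
  fun x => lineDeriv ℝ g x (EuclideanSpace.single i 1)

/-- The list of directions `(1,…,1,2,…,2,…)` (direction `i` repeated `J i` times)
encoding the iterated partial derivative `∂^{|J|}/∂x₁^{j₁}⋯∂xₙ^{jₙ}`. -/
def multiList (n : ℕ) (J : Fin n → ℕ) : List (Fin n) :=
  (List.finRange n).flatMap fun i => List.replicate (J i) i

/-- Iterated partial derivatives along a list of coordinate directions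
(the head of the list is the outermost derivative). -/
def iterD {n : ℕ} : List (Fin n) → (Euc n → ℝ) → (Euc n → ℝ)
  | [], g => g
  | i :: L, g => pd i (iterD L g)

/-- The iterated partial derivatives along the list `L` all exist at every point. -/
def iterDExists {n : ℕ} : List (Fin n) → (Euc n → ℝ) → Prop
  | [], _ => True
  | i :: L, g => iterDExists L g ∧
      ∀ x : Euc n, LineDifferentiableAt ℝ (iterD L g) x (EuclideanSpace.single i 1)

/-- `D^J u = ∂^{|J|}u/∂x₁^{j₁}⋯∂xₙ^{jₙ}`. -/
def DJ {n : ℕ} (J : Fin n → ℕ) (u : Euc n → ℝ) : Euc n → ℝ := iterD (multiList n J) u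

/-- The Taylor polynomial of `u` of degree `k−1` centered at `x₀`:
`P_{x₀}(y) = Σ_{|I| ≤ k−1} D^I u(x₀) (y − x₀)^I / I!`. -/
def TaylorPoly {n : ℕ} (k : ℕ) (u : Euc n → ℝ) (x₀ : Euc n) : Euc n → ℝ :=
  fun y => ∑ I ∈ multiIdxLt n k, DJ I u x₀ * mpow (y - x₀) I / (Jfact I : ℝ)

/-- `u` belongs to `Lip(k, ℝ^n)` with constant `M`: all partial derivatives `D^J u`
with `|J| ≤ k−1` exist at every point, and for all such `J` and all `x, x₀`,
`|D^J u(x₀)| ≤ M` and `|D^J u(x) − D^J P_{x₀}(x)| ≤ M ‖x − x₀‖^{k−|J|}`. -/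
def MemLip (n k : ℕ) (M : ℝ) (u : Euc n → ℝ) : Prop :=
  (∀ J : Fin n → ℕ, mdeg J < k → iterDExists (multiList n J) u) ∧
  ∀ J : Fin n → ℕ, mdeg J < k → ∀ x x₀ : Euc n,
    |DJ J u x₀| ≤ M ∧
    |DJ J u x - DJ J (TaylorPoly k u x₀) x| ≤ M * ‖x - x₀‖ ^ (k - mdeg J)

/-- Truncation of `f` at level `h`: equals `f` where `−h < f < h`, equals `h` where
`f ≥ h`, and equals `−h` where `f ≤ −h`. -/
def trunc {n : ℕ} (h : ℕ) (f : Euc n → ℝ) : Euc n → ℝ :=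
  fun x => if (h : ℝ) ≤ f x then (h : ℝ) else if f x ≤ -(h : ℝ) then -(h : ℝ) else f x

/-!
Two polynomials of degree `< k` that both approximate `f` to order `‖x - x₀‖ ^ k` off a set of
density zero at `x₀` coincide. Their difference `q` is `O(‖x - x₀‖ ^ k)` off that set; shrinking
it by factors `r m → 0` chosen summably (Borel–Cantelli), almost every ray `t ↦ x₀ + t • y`
eventually avoids it along `t = r m`, so `t ↦ q (t • y)` is a one-variable polynomial of degree
`< k` that is `O(t ^ k)` along a sequence tending to `0⁺`, hence zero.

By volume doubling, density zero can be tested along rational radii, and the constant `M` can be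
taken in `ℕ`; so the pairs `(x₀, c)` for which `c` is the coefficient vector of an approximate
Taylor polynomial at `x₀` form a Borel set. Its sections are singletons or empty, and a Borel set
with such sections is the graph of a Borel function on its projection (Lusin–Souslin).
-/

open scoped ENNReal Topology

section

variable {n : ℕ}

theorem MeasurableSet.exists_measurable_of_unique_sections {X Y : Type*} [MeasurableSpace X]
    [StandardBorelSpace X] [MeasurableSpace Y] [StandardBorelSpace Y] [Nonempty Y] {S : Set (X × Y)}
    (hS : MeasurableSet S) (hS_unique : ∀ x y y', (x, y) ∈ S → (x, y') ∈ S → y = y') :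
    ∃ g : X → Y, Measurable g ∧ ∀ x y, (x, y) ∈ S → g x = y := by
  classical
  have hinj : ∀ T ⊆ S, Set.InjOn Prod.fst T := fun T hT p hp q hq hpq =>
    Prod.ext hpq (hS_unique _ _ _ (hT hp) (hpq ▸ hT hq))
  let g x := if h : ∃ y, (x, y) ∈ S then h.choose else Classical.arbitrary Y
  have hg : ∀ x y, (x, y) ∈ S → g x = y := fun x y hxy => by
    have h : ∃ y, (x, y) ∈ S := ⟨y, hxy⟩
    simpa [g, h] using hS_unique _ _ _ h.choose_spec hxy
  refine ⟨g, fun B hB => ?_, hg⟩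
  have hpre : g ⁻¹' B = Prod.fst '' (S ∩ Prod.snd ⁻¹' B) ∪
      ((Prod.fst '' S)ᶜ ∩ {_x | Classical.arbitrary Y ∈ B}) := by
    ext x
    by_cases hx : ∃ y, (x, y) ∈ S
    · obtain ⟨y, hy⟩ := hx
      rw [Set.mem_preimage, hg x y hy]
      refine ⟨fun hyB => Or.inl ⟨(x, y), ⟨hy, hyB⟩, rfl⟩, ?_⟩
      rintro (⟨⟨x', y'⟩, ⟨hy', hy'B⟩, rfl⟩ | ⟨hx, -⟩)
      · rwa [hS_unique _ _ _ hy hy']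
      · exact absurd ⟨(x, y), hy, rfl⟩ hx
    · have hxS : x ∉ Prod.fst '' S := fun ⟨p, hp, hpx⟩ => hx ⟨p.2, hpx ▸ hp⟩
      simp only [Set.mem_preimage, g, dif_neg hx, Set.mem_union, Set.mem_inter_iff,
        Set.mem_compl_iff, hxS, not_false_eq_true, true_and, Set.mem_ofPred_eq,
        iff_or_self]
      rintro ⟨p, ⟨hp, -⟩, rfl⟩
      exact absurd ⟨p, hp, rfl⟩ hxS
  rw [hpre]
  exact ((hS.inter (measurable_snd hB)).image_of_measurable_injOn measurable_fst
    (hinj _ Set.inter_subset_left)).union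
    ((hS.image_of_measurable_injOn measurable_fst (hinj S subset_rfl)).compl.inter
      (MeasurableSet.const _))

open Polynomial in
theorem Polynomial.eq_zero_of_eventually_abs_eval_le {l : Filter ℝ} [l.NeBot]
    (hl : l ≤ 𝓝[>] 0) {C : ℝ} {k : ℕ} {p : ℝ[X]} (hp : p.degree < k)
    (h : ∀ᶠ t in l, |p.eval t| ≤ C * t ^ k) : p = 0 := by
  induction k generalizing p with
  | zero => simpa using hp
  | succ k ih =>
    have hl0 : l ≤ 𝓝 0 := hl.trans nhdsWithin_le_nhds
    have hp0 : p.eval 0 = 0 := by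
      have hC : Tendsto (fun t : ℝ => C * t ^ (k + 1)) l (𝓝 0) := by
        have hcont : Continuous fun t : ℝ => C * t ^ (k + 1) := by fun_prop
        simpa using (hcont.tendsto 0).mono_left hl0
      exact tendsto_nhds_unique ((p.continuous.tendsto 0).mono_left hl0)
        (squeeze_zero_norm' (h.mono fun t ht => by rwa [Real.norm_eq_abs]) hC)
    obtain ⟨q, rfl⟩ := (X_dvd_iff (f := p)).2 (by rwa [coeff_zero_eq_eval_zero])
    have hq : q.degree < k := by
      rw [mul_comm, degree_mul_X] at hp
      exact lt_of_add_lt_add_right (by exact_mod_cast hp)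
    have hq0 := ih hq <| (h.and (hl self_mem_nhdsWithin)).mono fun t ⟨ht, (ht0 : 0 < t)⟩ => by
      rw [eval_mul, eval_X, abs_mul, abs_of_pos ht0, pow_succ, ← mul_assoc, mul_comm t] at ht
      exact le_of_mul_le_mul_right ht ht0
    rw [hq0, mul_zero]

def densityRatio (S : Set (Euc n)) (x : Euc n) (r : ℝ) : ℝ≥0∞ :=
  volume (S ∩ ball x r) / volume (ball x r)

theorem densityOneAt_iff_tendsto {S : Set (Euc n)} {x : Euc n} :
    DensityOneAt S x ↔ Tendsto (densityRatio S x) (𝓝[>] 0) (𝓝 1) := Iff.rfl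

theorem densityRatio_le_one (S : Set (Euc n)) (x : Euc n) (r : ℝ) : densityRatio S x r ≤ 1 :=
  ENNReal.div_le_of_le_mul (by rw [one_mul]; exact measure_mono Set.inter_subset_right)

theorem densityRatio_mono {S T : Set (Euc n)} (h : S ⊆ T) (x : Euc n) (r : ℝ) :
    densityRatio S x r ≤ densityRatio T x r :=
  ENNReal.div_le_div_right (measure_mono (Set.inter_subset_inter_left _ h)) _

theorem densityRatio_union_le (S T : Set (Euc n)) (x : Euc n) (r : ℝ) :
    densityRatio (S ∪ T) x r ≤ densityRatio S x r + densityRatio T x r := by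
  rw [densityRatio, densityRatio, densityRatio, ← ENNReal.add_div, Set.union_inter_distrib_right]
  exact ENNReal.div_le_div_right (measure_union_le _ _) _

theorem densityRatio_compl {S : Set (Euc n)} (hS : MeasurableSet S) (x : Euc n) {r : ℝ}
    (hr : 0 < r) : densityRatio Sᶜ x r = 1 - densityRatio S x r := by
  have hball : volume (ball x r) ≠ 0 := (measure_ball_pos volume x hr).ne'
  have hdiff : Sᶜ ∩ ball x r = ball x r \ (S ∩ ball x r) := by ext; simp [and_comm]
  rw [densityRatio, densityRatio, hdiff,
    measure_sdiff Set.inter_subset_right (hS.inter measurableSet_ball).nullMeasurableSet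
      (measure_ne_top_of_subset Set.inter_subset_right measure_ball_lt_top.ne),
    ENNReal.sub_div (fun _ _ => hball), ENNReal.div_self hball measure_ball_lt_top.ne]

theorem densityZeroAt_iff {S : Set (Euc n)} (hS : MeasurableSet S) {x : Euc n} :
    DensityZeroAt S x ↔ Tendsto (densityRatio S x) (𝓝[>] 0) (𝓝 0) := by
  have hcompl : densityRatio Sᶜ x =ᶠ[𝓝[>] 0] fun r => 1 - densityRatio S x r :=
    eventually_mem_nhdsWithin.mono fun r hr => densityRatio_compl hS x hr
  rw [DensityZeroAt, densityOneAt_iff_tendsto, tendsto_congr' hcompl]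
  have hsub := ENNReal.continuous_sub_left ENNReal.one_ne_top
  constructor
  · intro h
    have h' := (hsub.tendsto 1).comp h
    simp only [Function.comp_def, tsub_self,
      ENNReal.sub_sub_cancel ENNReal.one_ne_top (densityRatio_le_one S x _)] at h'
    exact h'
  · intro h
    simpa [Function.comp_def] using (hsub.tendsto 0).comp h

theorem densityZeroAt_compl_iff {S : Set (Euc n)} {x : Euc n} :
    DensityZeroAt Sᶜ x ↔ DensityOneAt S x := by
  rw [DensityZeroAt, compl_compl]

theorem DensityZeroAt.mono {S T : Set (Euc n)} {x : Euc n} (h : DensityZeroAt T x)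
    (hST : S ⊆ T) : DensityZeroAt S x :=
  tendsto_of_tendsto_of_tendsto_of_le_of_le h tendsto_const_nhds
    (fun r => densityRatio_mono (Set.compl_subset_compl.2 hST) x r)
    (fun r => densityRatio_le_one _ x r)

theorem DensityZeroAt.union {S T : Set (Euc n)} (hS : MeasurableSet S) (hT : MeasurableSet T)
    {x : Euc n} (hS0 : DensityZeroAt S x) (hT0 : DensityZeroAt T x) :
    DensityZeroAt (S ∪ T) x := by
  rw [densityZeroAt_iff hS] at hS0
  rw [densityZeroAt_iff hT] at hT0
  rw [densityZeroAt_iff (hS.union hT)]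
  exact tendsto_of_tendsto_of_tendsto_of_le_of_le tendsto_const_nhds
    (by simpa using hS0.add hT0) (fun r => zero_le) (densityRatio_union_le S T x)

theorem volume_ball_le_two_pow_mul {x : Euc n} {r s : ℝ} (hr : 0 < r) (hs : s ≤ 2 * r) :
    volume (ball x s) ≤ 2 ^ n * volume (ball x r) := by
  rcases le_or_gt s 0 with hs0 | hs0
  · simp [ball_eq_empty.2 hs0]
  rw [Measure.addHaar_ball_of_pos _ _ hs0, Measure.addHaar_ball_of_pos _ _ hr,
    finrank_euclideanSpace_fin, ← mul_assoc]
  gcongr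
  calc ENNReal.ofReal (s ^ n) ≤ ENNReal.ofReal ((2 * r) ^ n) := by gcongr
    _ = 2 ^ n * ENNReal.ofReal (r ^ n) := by
      rw [mul_pow, ENNReal.ofReal_mul (by positivity), ENNReal.ofReal_pow zero_le_two]
      norm_num

theorem densityRatio_le_two_pow_mul (S : Set (Euc n)) (x : Euc n) {r s : ℝ} (hr : 0 < r)
    (hrs : r ≤ s) (hs : s ≤ 2 * r) :
    densityRatio S x r ≤ 2 ^ n * densityRatio S x s := by
  have hball : volume (ball x s) ≠ 0 := (measure_ball_pos volume x (hr.trans_le hrs)).ne'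
  refine ENNReal.div_le_of_le_mul ?_
  calc volume (S ∩ ball x r) ≤ volume (S ∩ ball x s) := by gcongr
    _ = densityRatio S x s * volume (ball x s) :=
      (ENNReal.div_mul_cancel hball measure_ball_lt_top.ne).symm
    _ ≤ densityRatio S x s * (2 ^ n * volume (ball x r)) := by
      gcongr; exact volume_ball_le_two_pow_mul hr hs
    _ = 2 ^ n * densityRatio S x s * volume (ball x r) := by ring

theorem tendsto_densityRatio_iff_rat {S : Set (Euc n)} {x : Euc n} :
    Tendsto (densityRatio S x) (𝓝[>] 0) (𝓝 0) ↔
      Tendsto (fun q : ℚ => densityRatio S x q) (comap ((↑) : ℚ → ℝ) (𝓝[>] 0)) (𝓝 0) := by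
  refine ⟨fun h => h.comp tendsto_comap, fun h => ?_⟩
  have hrat : ∀ r : ℝ, ∃ q : ℚ, 0 < r → r < q ∧ (q : ℝ) ≤ 2 * r := fun r =>
    if hr : 0 < r then (exists_rat_btwn (by linarith : r < 2 * r)).imp fun _ hq _ => ⟨hq.1, hq.2.le⟩
    else ⟨0, fun h => absurd h hr⟩
  choose q hq using hrat
  have hq_tendsto : Tendsto q (𝓝[>] 0) (comap ((↑) : ℚ → ℝ) (𝓝[>] 0)) := by
    refine tendsto_comap_iff.2 (tendsto_nhdsWithin_iff.2 ⟨?_, ?_⟩)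
    · have h2 : Tendsto (fun r : ℝ => 2 * r) (𝓝[>] 0) (𝓝 0) := by
        simpa using ((continuous_const_mul (2 : ℝ)).tendsto 0).mono_left nhdsWithin_le_nhds
      refine tendsto_of_tendsto_of_tendsto_of_le_of_le'
        (tendsto_id.mono_left nhdsWithin_le_nhds) h2 ?_ ?_ <;>
        filter_upwards [self_mem_nhdsWithin] with r hr
      exacts [(hq r hr).1.le, (hq r hr).2]
    · filter_upwards [self_mem_nhdsWithin] with r hr
      exact (hr.out.trans (hq r hr).1 :)
  have hlim : Tendsto (fun r => 2 ^ n * densityRatio S x (q r)) (𝓝[>] 0) (𝓝 0) := by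
    simpa using ENNReal.Tendsto.const_mul (h.comp hq_tendsto) (Or.inr (by simp))
  refine tendsto_of_tendsto_of_tendsto_of_le_of_le' tendsto_const_nhds hlim
    (Eventually.of_forall fun r => zero_le) ?_
  filter_upwards [self_mem_nhdsWithin] with r hr
  exact densityRatio_le_two_pow_mul S x hr (hq r hr).1.le (hq r hr).2

theorem measurable_densityRatio_preimage {W : Type*} [MeasurableSpace W] {T : Set (W × Euc n)}
    (hT : MeasurableSet T) {ξ : W → Euc n} (hξ : Measurable ξ) (r : ℝ) :
    Measurable fun w => densityRatio (Prod.mk w ⁻¹' T) (ξ w) r := by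
  have hball : MeasurableSet {p : W × Euc n | p.2 ∈ ball (ξ p.1) r} :=
    measurableSet_lt (measurable_snd.dist (hξ.comp measurable_fst)) measurable_const
  simp_rw [densityRatio, Measure.addHaar_ball_center]
  exact (measurable_measure_prodMk_left (hT.inter hball)).div_const _

theorem measurableSet_densityZeroAt {W : Type*} [MeasurableSpace W] {T : Set (W × Euc n)}
    (hT : MeasurableSet T) {ξ : W → Euc n} (hξ : Measurable ξ) :
    MeasurableSet {w | DensityZeroAt (Prod.mk w ⁻¹' T) (ξ w)} := by
  simp_rw [densityZeroAt_iff (measurable_prodMk_left hT), tendsto_densityRatio_iff_rat]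
  exact measurableSet_tendsto _ fun q => measurable_densityRatio_preimage hT hξ q

theorem volume_preimage_add_smul_inter_ball (S : Set (Euc n)) (x : Euc n) {r R : ℝ}
    (hr : 0 < r) (hR : 0 < R) :
    volume ((fun y => x + r • y) ⁻¹' S ∩ ball 0 R) =
      densityRatio S x (r * R) * volume (ball (0 : Euc n) R) := by
  have hpre : (fun y => x + r • y) ⁻¹' S ∩ ball 0 R =
      (r • ·) ⁻¹' ((x + ·) ⁻¹' (S ∩ ball x (r * R))) := by
    ext y
    simp [norm_smul, abs_of_pos hr, mul_lt_mul_iff_right₀ hr]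
  have hV : volume (ball (0 : Euc n) R) ≠ 0 := (measure_ball_pos _ _ hR).ne'
  have ha : ENNReal.ofReal (r ^ n) ≠ 0 := by simp [hr]
  rw [hpre, Measure.addHaar_preimage_smul volume hr.ne', measure_preimage_add, densityRatio,
    Measure.addHaar_ball_mul_of_pos _ _ hr, finrank_euclideanSpace_fin,
    abs_of_pos (by positivity), ENNReal.ofReal_inv_of_pos (by positivity),
    ENNReal.div_eq_inv_mul, ENNReal.mul_inv (Or.inl ha) (Or.inr hV)]
  calc _ = (volume (ball (0 : Euc n) R))⁻¹ * volume (ball (0 : Euc n) R) *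
        ((ENNReal.ofReal (r ^ n))⁻¹ * volume (S ∩ ball x (r * R))) := by
        rw [ENNReal.inv_mul_cancel hV measure_ball_lt_top.ne, one_mul, mul_comm]
    _ = _ := by ring

theorem DensityZeroAt.ae_restrict_ball_exists_tendsto {Z : Set (Euc n)} {x : Euc n}
    (hZ : MeasurableSet Z) (h : DensityZeroAt Z x) {R : ℝ} (hR : 0 < R) :
    ∀ᵐ y ∂volume.restrict (ball 0 R), ∃ r : ℕ → ℝ,
      Tendsto r atTop (𝓝[>] 0) ∧ ∀ᶠ m in atTop, x + r m • y ∉ Z := by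
  have hscale : Tendsto (· * R) (𝓝[>] (0 : ℝ)) (𝓝[>] 0) :=
    tendsto_nhdsWithin_iff.2 ⟨by simpa using (tendsto_nhdsWithin_of_tendsto_nhds
      ((continuous_mul_const R).tendsto 0)), eventually_mem_nhdsWithin.mono fun t ht =>
        mul_pos ht hR⟩
  have hlim := ((densityZeroAt_iff hZ).1 h).comp hscale
  have hex : ∀ m : ℕ, ∃ t : ℝ,
      densityRatio Z x (t * R) < 2⁻¹ ^ m ∧ t ∈ Set.Ioo 0 (1 / ((m : ℝ) + 1)) :=
    fun m => ((hlim.eventually (gt_mem_nhds (by simp [ENNReal.pow_pos]))).and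
      (Ioo_mem_nhdsGT (by positivity))).exists
  choose r hrZ hr using hex
  have hr_tendsto : Tendsto r atTop (𝓝[>] 0) :=
    tendsto_nhdsWithin_iff.2 ⟨squeeze_zero (fun m => (hr m).1.le) (fun m => (hr m).2.le)
      tendsto_one_div_add_atTop_nhds_zero_nat, Eventually.of_forall fun m => (hr m).1⟩
  have hsum : ∑' m, volume.restrict (ball 0 R) ((fun y => x + r m • y) ⁻¹' Z) ≠ ⊤ := by
    refine ne_top_of_le_ne_top (b := ∑' m : ℕ, 2⁻¹ ^ m * volume (ball (0 : Euc n) R)) ?_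
      (ENNReal.tsum_le_tsum fun m => ?_)
    · rw [ENNReal.tsum_mul_right, ENNReal.tsum_geometric]
      exact ENNReal.mul_ne_top (by simp) measure_ball_lt_top.ne
    · rw [Measure.restrict_apply' measurableSet_ball,
        volume_preimage_add_smul_inter_ball Z x (hr m).1 hR]
      gcongr
      exact (hrZ m).le
  filter_upwards [ae_eventually_notMem hsum] with y hy
  exact ⟨r, hr_tendsto, hy⟩

theorem DensityZeroAt.ae_exists_tendsto {Z : Set (Euc n)} {x : Euc n}
    (hZ : MeasurableSet Z) (h : DensityZeroAt Z x) :
    ∀ᵐ y, ∃ r : ℕ → ℝ, Tendsto r atTop (𝓝[>] 0) ∧ ∀ᶠ m in atTop, x + r m • y ∉ Z := by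
  rw [← Measure.restrict_univ (μ := volume), ← iUnion_ball_nat_succ (0 : Euc n),
    ae_restrict_iUnion_iff]
  exact fun R => h.ae_restrict_ball_exists_tendsto hZ R.cast_add_one_pos

-- Coefficient vectors range over `multiIdxLt n k → ℝ`, a finite-dimensional (hence standard
-- Borel) space, as the measurable selection of coefficients requires.
def multiIdxPoly {k : ℕ} (b : multiIdxLt n k → ℝ) (y : Euc n) : ℝ := ∑ J, b J * mpow y J

theorem mem_multiIdxLt_iff {k : ℕ} {J : Fin n → ℕ} : J ∈ multiIdxLt n k ↔ mdeg J < k := by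
  refine ⟨fun h => (Finset.mem_filter.1 h).2, fun h => Finset.mem_filter.2 ⟨?_, h⟩⟩
  refine Fintype.mem_piFinset.2 fun i => Finset.mem_range.2 ?_
  have : J i ≤ mdeg J := Finset.single_le_sum (fun i _ => Nat.zero_le (J i)) (Finset.mem_univ i)
  omega

theorem mpow_smul (t : ℝ) (y : Euc n) (J : Fin n → ℕ) :
    mpow (t • y) J = t ^ mdeg J * mpow y J := by
  simp only [mpow, mdeg, ← Finset.prod_pow_eq_pow_sum, ← Finset.prod_mul_distrib,
    PiLp.smul_apply, smul_eq_mul, mul_pow]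

theorem continuous_multiIdxPoly {k : ℕ} :
    Continuous fun p : (multiIdxLt n k → ℝ) × Euc n => multiIdxPoly p.1 p.2 := by
  unfold multiIdxPoly mpow
  fun_prop

theorem multiIdxPoly_sub {k : ℕ} (b b' : multiIdxLt n k → ℝ) (y : Euc n) :
    multiIdxPoly (b - b') y = multiIdxPoly b y - multiIdxPoly b' y := by
  simp only [multiIdxPoly, Pi.sub_apply, sub_mul, Finset.sum_sub_distrib]

open Polynomial in
def radialPoly {k : ℕ} (b : multiIdxLt n k → ℝ) (y : Euc n) : ℝ[X] :=
  ∑ J, C (b J * mpow y J) * X ^ mdeg (J : Fin n → ℕ)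

theorem eval_radialPoly {k : ℕ} (b : multiIdxLt n k → ℝ) (y : Euc n) (t : ℝ) :
    (radialPoly b y).eval t = multiIdxPoly b (t • y) := by
  simp only [radialPoly, multiIdxPoly, Polynomial.eval_finsetSum, Polynomial.eval_mul,
    Polynomial.eval_C, Polynomial.eval_pow, Polynomial.eval_X, mpow_smul]
  exact Finset.sum_congr rfl fun J _ => by ring

theorem degree_radialPoly_lt {k : ℕ} (b : multiIdxLt n k → ℝ) (y : Euc n) :
    (radialPoly b y).degree < k := by
  refine (Polynomial.degree_sum_le _ _).trans_lt ((Finset.sup_lt_iff (WithBot.bot_lt_coe k)).2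
    fun J _ => (Polynomial.degree_C_mul_X_pow_le _ _).trans_lt ?_)
  exact WithBot.coe_lt_coe.2 (mem_multiIdxLt_iff.1 J.2)

open MvPolynomial

theorem MvPolynomial.totalDegree_bind₁_le {σ R : Type*} [CommSemiring R]
    {g : σ → MvPolynomial σ R} (hg : ∀ i, (g i).totalDegree ≤ 1) (P : MvPolynomial σ R) :
    (bind₁ g P).totalDegree ≤ P.totalDegree := by
  conv_lhs => rw [P.as_sum, map_sum]
  refine (totalDegree_finsetSum _ _).trans (Finset.sup_le fun d hd => ?_)
  rw [bind₁_monomial]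
  refine (totalDegree_mul _ _).trans ?_
  rw [totalDegree_C, zero_add]
  refine (totalDegree_finsetProd _ _).trans ((Finset.sum_le_sum fun i _ =>
    (totalDegree_pow _ _).trans (mul_le_of_le_one_right' (hg i))).trans (le_totalDegree hd))

theorem MvPolynomial.eval_bind₁ {σ R : Type*} [CommSemiring R] (f : σ → R)
    (g : σ → MvPolynomial σ R) (φ : MvPolynomial σ R) :
    eval f (bind₁ g φ) = eval (fun i => eval f (g i)) φ :=
  eval₂Hom_bind₁ _ _ _ _

theorem sum_equivFunOnFinite_symm_eq_mdeg (J : Fin n → ℕ) :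
    ((Finsupp.equivFunOnFinite.symm J).sum fun _ e => e) = mdeg J :=
  Finsupp.sum_fintype _ _ fun _ => rfl

def multiIdxMvPoly {k : ℕ} (b : multiIdxLt n k → ℝ) : MvPolynomial (Fin n) ℝ :=
  ∑ J, monomial (Finsupp.equivFunOnFinite.symm J.1) (b J)

theorem eval_multiIdxMvPoly {k : ℕ} (b : multiIdxLt n k → ℝ) (y : Euc n) :
    eval (fun i => y i) (multiIdxMvPoly b) = multiIdxPoly b y := by
  simp [multiIdxMvPoly, multiIdxPoly, eval_monomial, Finsupp.prod_fintype, mpow]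

theorem coeff_multiIdxMvPoly {k : ℕ} (b : multiIdxLt n k → ℝ) (d : Fin n →₀ ℕ) :
    coeff d (multiIdxMvPoly b) = if h : ⇑d ∈ multiIdxLt n k then b ⟨d, h⟩ else 0 := by
  classical
  simp only [multiIdxMvPoly, coeff_sum, coeff_monomial]
  split_ifs with h
  · rw [Finset.sum_eq_single (⟨⇑d, h⟩ : multiIdxLt n k)
      (fun J _ hJ => if_neg fun hd => hJ (Subtype.ext (by simp [← hd]))) (by simp)]
    simp
  · exact Finset.sum_eq_zero fun J _ => if_neg fun hd => h (by simp [← hd])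

theorem totalDegree_multiIdxMvPoly_le {k : ℕ} (b : multiIdxLt n k → ℝ) :
    (multiIdxMvPoly b).totalDegree ≤ k - 1 := by
  refine (totalDegree_finsetSum _ _).trans (Finset.sup_le fun J _ => ?_)
  have := mem_multiIdxLt_iff.1 J.2
  exact (totalDegree_monomial_le _ _).trans
    ((sum_equivFunOnFinite_symm_eq_mdeg J.1).trans_le (by omega))

theorem multiIdxMvPoly_coeff {k : ℕ} {P : MvPolynomial (Fin n) ℝ} (hP : P.totalDegree < k) :
    multiIdxMvPoly (k := k) (fun J => coeff (Finsupp.equivFunOnFinite.symm J.1) P) = P := by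
  ext d
  rw [coeff_multiIdxMvPoly]
  split_ifs with h
  · simp
  · by_contra hne
    have := le_totalDegree (mem_support_iff.2 (Ne.symm hne))
    refine h (mem_multiIdxLt_iff.2 ?_)
    rw [← sum_equivFunOnFinite_symm_eq_mdeg, Finsupp.equivFunOnFinite_symm_coe]
    omega

theorem eq_zero_of_multiIdxPoly_eq_zero {k : ℕ} {b : multiIdxLt n k → ℝ}
    (h : ∀ y, multiIdxPoly b y = 0) : b = 0 := by
  have hP : multiIdxMvPoly b = 0 := MvPolynomial.funext fun z => by
    rw [map_zero]
    exact (eval_multiIdxMvPoly b (WithLp.toLp 2 z)).trans (h _)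
  funext J
  simpa [hP, J.2] using (coeff_multiIdxMvPoly b (Finsupp.equivFunOnFinite.symm J)).symm

theorem isPolyFun_multiIdxPoly_sub {k : ℕ} (b : multiIdxLt n k → ℝ) (x₀ : Euc n) :
    IsPolyFun n (k - 1) fun x => multiIdxPoly b (x - x₀) := by
  refine ⟨bind₁ (fun i => X i - C (x₀ i)) (multiIdxMvPoly b),
    (totalDegree_bind₁_le (fun i => ?_) _).trans (totalDegree_multiIdxMvPoly_le b), fun x => ?_⟩
  · exact (totalDegree_sub _ _).trans (by simp)
  · dsimp only
    rw [eval_bind₁, ← eval_multiIdxMvPoly]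
    congr 2
    funext i
    simp

theorem IsPolyFun.exists_eq_multiIdxPoly_sub {k : ℕ} (hk : 0 < k) {p : Euc n → ℝ}
    (hp : IsPolyFun n (k - 1) p) (x₀ : Euc n) :
    ∃ b : multiIdxLt n k → ℝ, ∀ x, p x = multiIdxPoly b (x - x₀) := by
  obtain ⟨P, hdeg, hP⟩ := hp
  set Q := bind₁ (fun i => X i + C (x₀ i)) P
  have hQ : Q.totalDegree < k :=
    ((totalDegree_bind₁_le (fun i => (totalDegree_add _ _).trans (by simp)) P).trans
      hdeg).trans_lt (by omega)
  refine ⟨fun J => coeff (Finsupp.equivFunOnFinite.symm J.1) Q, fun x => ?_⟩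
  rw [← eval_multiIdxMvPoly, multiIdxMvPoly_coeff hQ, hP, eval_bind₁]
  congr 2
  funext i
  simp

theorem eq_zero_of_abs_multiIdxPoly_le {k : ℕ} {b : multiIdxLt n k → ℝ} {Z : Set (Euc n)}
    {x₀ : Euc n} (hZ : MeasurableSet Z) (hZ0 : DensityZeroAt Z x₀) {M : ℝ}
    (hb : ∀ x ∉ Z, |multiIdxPoly b (x - x₀)| ≤ M * ‖x - x₀‖ ^ k) : b = 0 := by
  have hcont : Continuous (multiIdxPoly b) :=
    continuous_multiIdxPoly.comp (continuous_const.prodMk continuous_id)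
  refine eq_zero_of_multiIdxPoly_eq_zero
    (congrFun ((hcont.ae_eq_iff_eq volume continuous_const).1 ?_))
  filter_upwards [hZ0.ae_exists_tendsto hZ] with y ⟨r, hr, hrZ⟩
  have hrad : radialPoly b y = 0 := by
    refine Polynomial.eq_zero_of_eventually_abs_eval_le (l := map r atTop) hr
      (degree_radialPoly_lt b y) (C := M * ‖y‖ ^ k) (eventually_map.2 ?_)
    filter_upwards [hrZ, (tendsto_nhdsWithin_iff.1 hr).2] with m hm (hm0 : 0 < r m)
    have := hb _ hm
    rw [add_sub_cancel_left, norm_smul, Real.norm_eq_abs, abs_of_pos hm0, mul_pow] at this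
    rw [eval_radialPoly]
    linarith
  simpa [hrad] using (eval_radialPoly b y 1).symm

theorem hasApproxTaylorAt_congr {k : ℕ} {D : Set (Euc n)} {f g : Euc n → ℝ}
    (hfg : Set.EqOn f g D) {x₀ : Euc n} {p : Euc n → ℝ} :
    HasApproxTaylorAt k D f x₀ p ↔ HasApproxTaylorAt k D g x₀ p := by
  have hset : ∀ M : ℝ, {x | x ∈ D ∧ M * ‖x - x₀‖ ^ k < |f x - p x|} =
      {x | x ∈ D ∧ M * ‖x - x₀‖ ^ k < |g x - p x|} :=
    fun M => Set.ext fun x => and_congr_right fun hx => by rw [hfg hx]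
  simp only [HasApproxTaylorAt, hset]

theorem hasApproxTaylorAt_iff_exists_nat {k : ℕ} {D : Set (Euc n)} {f : Euc n → ℝ}
    {x₀ : Euc n} {p : Euc n → ℝ} (hp : IsPolyFun n (k - 1) p) :
    HasApproxTaylorAt k D f x₀ p ↔ DensityOneAt D x₀ ∧ ∃ m : ℕ,
      DensityZeroAt {x | x ∈ D ∧ ((m : ℝ) + 1) * ‖x - x₀‖ ^ k < |f x - p x|} x₀ := by
  refine and_congr_right fun _ => ⟨fun ⟨_, M, _, h⟩ => ⟨⌈M⌉₊, h.mono fun x hx =>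
    ⟨hx.1, lt_of_le_of_lt ?_ hx.2⟩⟩, fun ⟨m, h⟩ => ⟨hp, (m : ℝ) + 1, by positivity, h⟩⟩
  gcongr
  linarith [Nat.le_ceil M]

theorem measurableSet_taylorExcess {k : ℕ} {D : Set (Euc n)} (hD : MeasurableSet D)
    {f p : Euc n → ℝ} (hf : Measurable f) (hp : Measurable p) (M : ℝ) (x₀ : Euc n) :
    MeasurableSet {x | x ∈ D ∧ M * ‖x - x₀‖ ^ k < |f x - p x|} :=
  hD.inter (measurableSet_lt (by fun_prop) (hf.sub hp).abs)

def taylorCoeffSet (k : ℕ) (D : Set (Euc n)) (f : Euc n → ℝ) :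
    Set (Euc n × (multiIdxLt n k → ℝ)) :=
  {w | HasApproxTaylorAt k D f w.1 fun x => multiIdxPoly w.2 (x - w.1)}

theorem measurableSet_taylorCoeffSet {k : ℕ} {D : Set (Euc n)} (hD : MeasurableSet D)
    {f : Euc n → ℝ} (hf : Measurable f) : MeasurableSet (taylorCoeffSet k D f) := by
  let T : ℕ → Set ((Euc n × (multiIdxLt n k → ℝ)) × Euc n) := fun m =>
    {q | q.2 ∈ D ∧ ((m : ℝ) + 1) * ‖q.2 - q.1.1‖ ^ k <
      |f q.2 - multiIdxPoly q.1.2 (q.2 - q.1.1)|}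
  have hT : ∀ m, MeasurableSet (T m) := fun m => by
    have h1 : Measurable fun q : (Euc n × (multiIdxLt n k → ℝ)) × Euc n =>
        ((m : ℝ) + 1) * ‖q.2 - q.1.1‖ ^ k := by fun_prop
    have h2 : Measurable fun q : (Euc n × (multiIdxLt n k → ℝ)) × Euc n =>
        multiIdxPoly q.1.2 (q.2 - q.1.1) :=
      continuous_multiIdxPoly.measurable.comp
        (f := fun q : (Euc n × (multiIdxLt n k → ℝ)) × Euc n => (q.1.2, q.2 - q.1.1))
        (by fun_prop)
    exact (measurable_snd hD).inter (measurableSet_lt h1 ((hf.comp measurable_snd).sub h2).abs)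
  have hset : taylorCoeffSet k D f = {w | DensityZeroAt (Prod.mk w ⁻¹' (Prod.snd ⁻¹' Dᶜ)) w.1} ∩
      ⋃ m, {w | DensityZeroAt (Prod.mk w ⁻¹' T m) w.1} := by
    ext w
    exact (hasApproxTaylorAt_iff_exists_nat (isPolyFun_multiIdxPoly_sub _ _)).trans
      (and_congr densityZeroAt_compl_iff.symm (by rw [Set.mem_iUnion]; rfl))
  rw [hset]
  exact (measurableSet_densityZeroAt (measurable_snd hD.compl) measurable_fst).inter
    (.iUnion fun m => measurableSet_densityZeroAt (hT m) measurable_fst)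

theorem taylorCoeffSet_unique {k : ℕ} {D : Set (Euc n)} (hD : MeasurableSet D)
    {f : Euc n → ℝ} (hf : Measurable f) {x₀ : Euc n} {c c' : multiIdxLt n k → ℝ}
    (h : (x₀, c) ∈ taylorCoeffSet k D f) (h' : (x₀, c') ∈ taylorCoeffSet k D f) : c = c' := by
  obtain ⟨hD1, -, M, -, hM⟩ := h
  obtain ⟨-, -, M', -, hM'⟩ := h'
  have hE : ∀ (b : multiIdxLt n k → ℝ) (M : ℝ), MeasurableSet
      {x | x ∈ D ∧ M * ‖x - x₀‖ ^ k < |f x - multiIdxPoly b (x - x₀)|} :=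
    fun b M => measurableSet_taylorExcess hD hf (continuous_multiIdxPoly.comp
      (continuous_const.prodMk (continuous_id.sub continuous_const))).measurable M x₀
  have hZ0 := ((densityZeroAt_compl_iff.2 hD1).union hD.compl (hE c M) hM).union
    (hD.compl.union (hE c M)) (hE c' M') hM'
  refine sub_eq_zero.1 (eq_zero_of_abs_multiIdxPoly_le (M := M + M')
    ((hD.compl.union (hE c M)).union (hE c' M')) hZ0 fun x hx => ?_)
  simp only [Set.mem_union, Set.mem_compl_iff, Set.mem_ofPred_eq, not_or, not_and, not_lt,
    not_not] at hx
  obtain ⟨⟨hxD, hc⟩, hc'⟩ := hx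
  rw [multiIdxPoly_sub]
  calc |multiIdxPoly c (x - x₀) - multiIdxPoly c' (x - x₀)|
      = |(f x - multiIdxPoly c' (x - x₀)) - (f x - multiIdxPoly c (x - x₀))| := by ring_nf
    _ ≤ |f x - multiIdxPoly c' (x - x₀)| + |f x - multiIdxPoly c (x - x₀)| := abs_sub _ _
    _ ≤ M' * ‖x - x₀‖ ^ k + M * ‖x - x₀‖ ^ k := add_le_add (hc' hxD) (hc hxD)
    _ = (M + M') * ‖x - x₀‖ ^ k := by ring

end

theorem stmt12_general (n : ℕ) (D : Set (Euc n)) (hD : MeasurableSet D)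
    (k : ℕ) (hk : 0 < k) (f : Euc n → ℝ) (hf : Measurable (D.restrict f))
    (htay : ∀ᵐ x₀ ∂(volume.restrict D), ∃ p : Euc n → ℝ, HasApproxTaylorAt k D f x₀ p) :
    ∃ a : (Fin n → ℕ) → Euc n → ℝ,
      (∀ J ∈ multiIdxLt n k, Measurable (D.restrict (a J))) ∧
      ∀ᵐ x₀ ∂(volume.restrict D),
        HasApproxTaylorAt k D f x₀
          (fun x => ∑ J ∈ multiIdxLt n k, a J x₀ * mpow (x - x₀) J) := by
  obtain ⟨g, hg, hgf⟩ :=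
    (MeasurableEmbedding.subtype_coe hD).exists_measurable_extend hf fun _ => inferInstance
  have hfg : Set.EqOn f g D := fun x hx => (congrFun hgf ⟨x, hx⟩).symm
  obtain ⟨c, hc, hc_eq⟩ := (measurableSet_taylorCoeffSet hD hg).exists_measurable_of_unique_sections
    fun _ _ _ => taylorCoeffSet_unique hD hg
  refine ⟨fun J x₀ => if hJ : J ∈ multiIdxLt n k then c x₀ ⟨J, hJ⟩ else 0, fun J hJ => ?_, ?_⟩
  · simp only [hJ, dif_pos]
    exact ((measurable_pi_apply _).comp hc).comp measurable_subtype_coe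
  filter_upwards [htay] with x₀ ⟨p, hp⟩
  rw [hasApproxTaylorAt_congr hfg] at hp ⊢
  obtain ⟨b, hb⟩ := hp.2.1.exists_eq_multiIdxPoly_sub hk x₀
  have hb_mem : (x₀, b) ∈ taylorCoeffSet k D g := by
    rwa [taylorCoeffSet, Set.mem_ofPred_eq, ← funext hb]
  have hcb : HasApproxTaylorAt k D g x₀ fun x => multiIdxPoly (c x₀) (x - x₀) :=
    hc_eq _ _ hb_mem ▸ hb_mem
  convert hcb using 2 with x
  rw [multiIdxPoly, ← Finset.sum_coe_sort]
  exact Finset.sum_congr rfl fun J _ => by rw [dif_pos J.2]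

/-- **Corollary 4.4** (abelian case). If `f` has an approximate `(k−1)`-Taylor
polynomial a.e. on `D`, then its coefficients can be chosen to be measurable
functions on `D`. -/
theorem stmt12 (n : ℕ) (hn : 0 < n) (D : Set (Euc n)) (hD : MeasurableSet D)
    (k : ℕ) (hk : 0 < k) (f : Euc n → ℝ) (hf : Measurable (D.restrict f))
    (htay : ∀ᵐ x₀ ∂(volume.restrict D), ∃ p : Euc n → ℝ, HasApproxTaylorAt k D f x₀ p) :
    ∃ a : (Fin n → ℕ) → Euc n → ℝ,
      (∀ J ∈ multiIdxLt n k, Measurable (D.restrict (a J))) ∧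
      ∀ᵐ x₀ ∂(volume.restrict D),
        HasApproxTaylorAt k D f x₀
          (fun x => ∑ J ∈ multiIdxLt n k, a J x₀ * mpow (x - x₀) J) :=
  stmt12_general n D hD k hk f hf htay
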